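/- Let φ be a graph automorphism of Γ₈. If φ(v₁) = v₁, then φ maps {a₁, b₁} onto {a₁, b₁} and {a₂, b₂} onto {a₂, b₂}; if φ(v₁) = v₂, then φ maps {a₁, b₁} onto {a₂, b₂} and {a₂, b₂} onto {a₁, b₁}. -/

import Mathlib

/-! The vertices `v₁`, `v₂` are the only ones of degree 2, so every automorphism permutes them,
and it carries the neighbourhood `{a₁, b₁}` of `v₁` and `{a₂, b₂}` of `v₂` along. -/

/-- The vertices of the graph `Γ₈`. -/
inductive V8 : Type
  | v1 | v2 | a1 | a2 | a3 | b1 | b2 | b3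
  deriving DecidableEq

open V8

/-- The graph `Γ₈`: the hexagonal cycle `a₁a₂a₃b₁b₂b₃a₁`, the chord `a₃b₃`,
and the four edges `a₁v₁`, `v₁b₁`, `a₂v₂`, `v₂b₂`. -/
def Gamma8 : SimpleGraph V8 :=
  SimpleGraph.fromEdgeSet
    {s(a1, a2), s(a2, a3), s(a3, b1), s(b1, b2), s(b2, b3), s(b3, a1),
     s(a3, b3),
     s(a1, v1), s(v1, b1), s(a2, v2), s(v2, b2)}

open SimpleGraph

instance : Fintype V8 :=
  ⟨{v1, v2, a1, a2, a3, b1, b2, b3}, fun v => by cases v <;> decide⟩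

instance : DecidableRel Gamma8.Adj :=
  fun _ _ => decidable_of_iff' _ (fromEdgeSet_adj _)

lemma Gamma8_neighborSet_v1 : Gamma8.neighborSet v1 = {a1, b1} := by
  ext w; cases w <;> decide

lemma Gamma8_neighborSet_v2 : Gamma8.neighborSet v2 = {a2, b2} := by
  ext w; cases w <;> decide

lemma Gamma8_degree_eq_two_iff {v : V8} : Gamma8.degree v = 2 ↔ v = v1 ∨ v = v2 := by
  cases v <;> decide

lemma Gamma8_iso_apply_v2_eq_v1_or_v2 (φ : Gamma8 ≃g Gamma8) : φ v2 = v1 ∨ φ v2 = v2 := by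
  rw [← Gamma8_degree_eq_two_iff, φ.degree_eq]
  exact Gamma8_degree_eq_two_iff.mpr (Or.inr rfl)

/-- Let `φ` be a graph automorphism of `Γ₈`. If `φ(v₁) = v₁`, then `φ` maps `{a₁, b₁}` onto
`{a₁, b₁}` and `{a₂, b₂}` onto `{a₂, b₂}`; if `φ(v₁) = v₂`, then `φ` maps `{a₁, b₁}` onto
`{a₂, b₂}` and `{a₂, b₂}` onto `{a₁, b₁}`. -/
theorem automorphism_of_Gamma8_pair_behavior (φ : Gamma8 ≃g Gamma8) :
    (φ v1 = v1 →
      ⇑φ '' ({a1, b1} : Set V8) = {a1, b1} ∧ ⇑φ '' ({a2, b2} : Set V8) = {a2, b2}) ∧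
    (φ v1 = v2 →
      ⇑φ '' ({a1, b1} : Set V8) = {a2, b2} ∧ ⇑φ '' ({a2, b2} : Set V8) = {a1, b1}) := by
  have hne : φ v2 ≠ φ v1 := φ.injective.ne (by decide)
  -- this also turns the right-hand sides into the neighbourhoods of `v₁` and `v₂`
  rw [← Gamma8_neighborSet_v1, ← Gamma8_neighborSet_v2, φ.image_neighborSet,
    φ.image_neighborSet]
  refine ⟨fun h => ?_, fun h => ?_⟩
  · have h2 : φ v2 = v2 := (Gamma8_iso_apply_v2_eq_v1_or_v2 φ).resolve_left (h ▸ hne)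
    rw [h, h2]
    exact ⟨rfl, rfl⟩
  · have h2 : φ v2 = v1 := (Gamma8_iso_apply_v2_eq_v1_or_v2 φ).resolve_right (h ▸ hne)
    rw [h, h2]
    exact ⟨rfl, rfl⟩
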